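/- In the simplicial setup, if a monomial x^μ y^ν of S is not divisible by any element of N₁, then x^μ = m_b for some b ∈ B_A; consequently x^μ y^ν ∈ M₁ := ∪_{b∈B_A} m_b·M_T. -/

import Mathlib

namespace SimplicialToric

/-- `eVec d α i` is `α` times the `i`-th standard basis vector of `ℕ^d`. -/
def eVec (d α : ℕ) (i : Fin d) : Fin d → ℕ := fun j => if j = i then α else 0

/-- The Hilbert basis of a submonoid `B ⊆ ℕ^d`: the set of irreducible elements
(in `ℕ^d` the only unit is `0`). -/
def Hilb {d : ℕ} (B : AddSubmonoid (Fin d → ℕ)) : Set (Fin d → ℕ) :=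
  {b | b ∈ B ∧ b ≠ 0 ∧ ∀ x ∈ B, ∀ y ∈ B, b = x + y → x = 0 ∨ y = 0}

/-- The submonoid `A = Σᵢ ℤ≥0·eᵢ = αℤ≥0^d`. -/
def Amon (d α : ℕ) : AddSubmonoid (Fin d → ℕ) :=
  AddSubmonoid.closure (Set.range (eVec d α))

/-- `B_A = {x ∈ B : x − a ∉ B for every a ∈ A \ {0}}`. -/
def BA {d : ℕ} (B : AddSubmonoid (Fin d → ℕ)) (α : ℕ) : Set (Fin d → ℕ) :=
  {x | x ∈ B ∧ ∀ z ∈ Amon d α, z ≠ 0 → ∀ y ∈ B, x ≠ y + z}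

/-- The generators `a₁,…,a_c,e₁,…,e_d` of `B`, indexed by the variables of
`S = K[x₁,…,x_c,y₁,…,y_d]`; variable `Fin.castAdd d i` is `xᵢ`, variable
`Fin.natAdd c j` is `yⱼ`. -/
def gens (c d α : ℕ) (a : Fin c → Fin d → ℕ) : Fin (c + d) → Fin d → ℕ :=
  Fin.addCases a (eVec d α)

/-- The element of `B` represented by the monomial with exponent vector `σ`:
`π(x^μ y^ν) = t^(valE σ)`. -/
def valE (c d α : ℕ) (a : Fin c → Fin d → ℕ) (σ : Fin (c + d) →₀ ℕ) : Fin d → ℕ :=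
  ∑ v : Fin (c + d), σ v • gens c d α a v

/-- total degree of a monomial (exponent vector). -/
def degE {N : ℕ} (σ : Fin N →₀ ℕ) : ℕ := ∑ v, σ v

/-- the graded reverse lexicographic order: `grevlex σ τ` means `σ ≺ τ`,
i.e. `deg σ < deg τ`, or degrees agree and the last nonzero entry of `τ − σ`
is negative. -/
def grevlex {N : ℕ} (σ τ : Fin N →₀ ℕ) : Prop :=
  degE σ < degE τ ∨ (degE σ = degE τ ∧ ∃ k, τ k < σ k ∧ ∀ l, k < l → σ l = τ l)

/-- `x ∼ y` iff `x − y ∈ gp(A) = αℤ^d`. -/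
def Rel {d : ℕ} (α : ℕ) (x y : Fin d → ℕ) : Prop :=
  ∀ j, (α : ℤ) ∣ (x j : ℤ) - (y j : ℤ)

/-- `Γ` is an equivalence class of `B_A` modulo `αℤ^d`. -/
def IsClass {d : ℕ} (B : AddSubmonoid (Fin d → ℕ)) (α : ℕ) (Γ : Set (Fin d → ℕ)) : Prop :=
  ∃ x ∈ BA B α, Γ = {y | y ∈ BA B α ∧ Rel α x y}

/-- the total order on an equivalence class of `B_A`: `b ≺ c` iff the last
nonzero entry of `b − c` is negative. -/
def ltCls {d : ℕ} (x y : Fin d → ℕ) : Prop :=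
  ∃ k, x k < y k ∧ ∀ l, k < l → x l = y l

/-- `joinSub x y = x∨y − y`, where `x∨y` is the componentwise maximum. -/
def joinSub {d : ℕ} (x y : Fin d → ℕ) : Fin d → ℕ := fun j => max (x j) (y j) - y j

/-- the monomial with exponents `σ` lies in `T = K[y₁,…,y_d]`. -/
def yOnly (c d : ℕ) (σ : Fin (c + d) →₀ ℕ) : Prop := ∀ i : Fin c, σ (Fin.castAdd d i) = 0

/-- the monomial with exponents `σ` involves only the `x`-variables. -/
def xOnly (c d : ℕ) (σ : Fin (c + d) →₀ ℕ) : Prop := ∀ j : Fin d, σ (Fin.natAdd c j) = 0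

/-- the set `N₁`, for a given choice `m` of the minimal monomials `m_b`. -/
def N1set (c d α : ℕ) (a : Fin c → Fin d → ℕ) (B : AddSubmonoid (Fin d → ℕ))
    (m : (Fin d → ℕ) → (Fin (c + d) →₀ ℕ)) : Set (Fin (c + d) →₀ ℕ) :=
  {n | ∃ (i : Fin c) (b : Fin d → ℕ), b ∈ BA B α ∧
    n = Finsupp.single (Fin.castAdd d i) 1 + m b ∧ n ≠ m (a i + b)}

/-- the set `N₂ = ∪_Γ N_Γ`, where `N_Γ = {n(bᵢ,bⱼ) = m_{bⱼ}·m_{bᵢ∨bⱼ−bⱼ} : bᵢ ≺ bⱼ in Γ}`. -/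
def N2set {d : ℕ} (c α : ℕ) (B : AddSubmonoid (Fin d → ℕ))
    (m : (Fin d → ℕ) → (Fin (c + d) →₀ ℕ)) : Set (Fin (c + d) →₀ ℕ) :=
  {n | ∃ Γ, IsClass B α Γ ∧ ∃ bi ∈ Γ, ∃ bj ∈ Γ, ltCls bi bj ∧ n = m bj + m (joinSub bi bj)}

/-- `σ` is the exponent vector of the initial (i.e. `≺`-largest) term of `f`. -/
def IsLeadMon {N : ℕ} {K : Type*} [Field K] (f : MvPolynomial (Fin N) K)
    (σ : Fin N →₀ ℕ) : Prop :=
  σ ∈ f.support ∧ ∀ τ ∈ f.support, τ = σ ∨ grevlex τ σ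

/-- the initial ideal of `I` with respect to the graded reverse lexicographic order. -/
noncomputable def initialIdeal {N : ℕ} {K : Type*} [Field K] (I : Ideal (MvPolynomial (Fin N) K)) :
    Ideal (MvPolynomial (Fin N) K) :=
  Ideal.span {g | ∃ f ∈ I, ∃ σ, IsLeadMon f σ ∧ g = MvPolynomial.monomial σ (1 : K)}

end SimplicialToric

open SimplicialToric

namespace SimplicialToric

/-- the `x`-part `x^μ` of a monomial `x^μ y^ν`. -/
noncomputable def xpart (c d : ℕ) (σ : Fin (c + d) →₀ ℕ) : Fin (c + d) →₀ ℕ :=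
  ∑ i : Fin c, Finsupp.single (Fin.castAdd d i) (σ (Fin.castAdd d i))

/-- the `y`-part `y^ν` of a monomial `x^μ y^ν`. -/
noncomputable def ypart (c d : ℕ) (σ : Fin (c + d) →₀ ℕ) : Fin (c + d) →₀ ℕ :=
  ∑ j : Fin d, Finsupp.single (Fin.natAdd c j) (σ (Fin.natAdd c j))

end SimplicialToric

theorem AddSubmonoid.eq_zero_or_exists_add_of_mem_closure {M : Type*} [AddMonoid M] {s : Set M}
    {z : M} (hz : z ∈ AddSubmonoid.closure s) :
    z = 0 ∨ ∃ g ∈ s, ∃ z' ∈ AddSubmonoid.closure s, z = g + z' := by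
  induction hz using AddSubmonoid.closure_induction with
  | mem g hg => exact .inr ⟨g, hg, 0, zero_mem _, (add_zero g).symm⟩
  | zero => exact .inl rfl
  | add x y _ hy ihx _ =>
    rcases ihx with rfl | ⟨g, hg, x', hx', rfl⟩
    · rwa [zero_add]
    · exact .inr ⟨g, hg, x' + y, add_mem hx' hy, add_assoc g x' y⟩

namespace SimplicialToric

variable {c d α : ℕ} {a : Fin c → Fin d → ℕ}

theorem exists_eVec_add_of_mem_Amon {z : Fin d → ℕ} (hz : z ∈ Amon d α) (hz0 : z ≠ 0) :
    ∃ j, ∃ z' ∈ Amon d α, z = eVec d α j + z' := by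
  rcases AddSubmonoid.eq_zero_or_exists_add_of_mem_closure hz with h | ⟨_, ⟨j, rfl⟩, z', hz', h⟩
  · exact absurd h hz0
  · exact ⟨j, z', hz', h⟩

theorem castAdd_lt_natAdd (i : Fin c) (j : Fin d) : Fin.castAdd d i < Fin.natAdd c j := by
  rw [Fin.lt_def, Fin.val_castAdd, Fin.val_natAdd]
  omega

theorem sum_gens (hdeg : ∀ i, ∑ j, a i j = α) (v : Fin (c + d)) : ∑ j, gens c d α a v j = α := by
  induction v using Fin.addCases with
  | left i => simp [gens, hdeg]
  | right j => simp [gens, eVec]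

theorem valE_add (σ τ : Fin (c + d) →₀ ℕ) :
    valE c d α a (σ + τ) = valE c d α a σ + valE c d α a τ := by
  simp [valE, add_smul, Finset.sum_add_distrib]

theorem valE_single (v : Fin (c + d)) (k : ℕ) :
    valE c d α a (Finsupp.single v k) = k • gens c d α a v := by
  rw [valE, Finset.sum_eq_single v] <;> simp +contextual [eq_comm]

theorem sum_valE (hdeg : ∀ i, ∑ j, a i j = α) (σ : Fin (c + d) →₀ ℕ) :
    ∑ j, valE c d α a σ j = α * degE σ := by
  simp only [valE, Finset.sum_apply, Pi.smul_apply, smul_eq_mul]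
  rw [Finset.sum_comm, degE, Finset.mul_sum]
  exact Finset.sum_congr rfl fun v _ => by rw [← Finset.mul_sum, sum_gens hdeg, mul_comm]

theorem degE_eq_of_valE_eq (hα : 0 < α) (hdeg : ∀ i, ∑ j, a i j = α) {σ τ : Fin (c + d) →₀ ℕ}
    (h : valE c d α a σ = valE c d α a τ) : degE σ = degE τ :=
  Nat.eq_of_mul_eq_mul_left hα <| by rw [← sum_valE hdeg, ← sum_valE hdeg, h]

theorem degE_eq_zero_iff {N : ℕ} {σ : Fin N →₀ ℕ} : degE σ = 0 ↔ σ = 0 := by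
  simp [degE, Finset.sum_eq_zero_iff, Finsupp.ext_iff]

theorem xpart_xOnly (σ : Fin (c + d) →₀ ℕ) : xOnly c d (xpart c d σ) := fun j => by
  simp [xpart, (castAdd_lt_natAdd _ j).ne]

theorem xpart_add_ypart (σ : Fin (c + d) →₀ ℕ) : xpart c d σ + ypart c d σ = σ := by
  ext v
  induction v using Fin.addCases with
  | left i => simp [xpart, ypart, Finsupp.single_apply, (castAdd_lt_natAdd i _).ne']
  | right j => simp [xpart, ypart, Finsupp.single_apply, (castAdd_lt_natAdd _ j).ne]

theorem xOnly.mono {σ τ : Fin (c + d) →₀ ℕ} (hτ : xOnly c d τ) (h : σ ≤ τ) : xOnly c d σ :=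
  fun j => Nat.eq_zero_of_le_zero (hτ j ▸ h _)

theorem xOnly.exists_castAdd_ne_zero {σ : Fin (c + d) →₀ ℕ} (hσ : xOnly c d σ) (h0 : σ ≠ 0) :
    ∃ i, σ (Fin.castAdd d i) ≠ 0 := by
  obtain ⟨v, hv⟩ := Finsupp.ne_iff.mp h0
  induction v using Fin.addCases with
  | left i => exact ⟨i, hv⟩
  | right j => exact absurd (hσ j) hv

/-- Grevlex decides at the last variable where two monomials differ, and the `y`-variables are
the last ones. -/
theorem xOnly.not_grevlex {σ τ : Fin (c + d) →₀ ℕ} {j : Fin d} (hσ : xOnly c d σ)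
    (hτ : τ (Fin.natAdd c j) ≠ 0) (hdeg : degE τ ≤ degE σ) : ¬ grevlex σ τ := by
  rintro (hlt | ⟨-, k, hk, hks⟩)
  · omega
  induction k using Fin.addCases with
  | left i => exact hτ (hσ j ▸ (hks _ (castAdd_lt_natAdd i j)).symm)
  | right l => exact absurd (hσ l) (Nat.ne_zero_of_lt hk)

variable {B : AddSubmonoid (Fin d → ℕ)} {m : (Fin d → ℕ) → (Fin (c + d) →₀ ℕ)}

/-- If `b = y + z` with `0 ≠ z ∈ A`, then `m_{y + z - eⱼ} yⱼ` also represents `b`; it has the same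
degree and involves a `y`-variable, so it beats a minimal representative without `y`-variables. -/
theorem mem_BA_of_xOnly (hα : 0 < α) (hdeg : ∀ i, ∑ j, a i j = α) (hA : Amon d α ≤ B)
    (hmval : ∀ b ∈ B, valE c d α a (m b) = b)
    (hmmin : ∀ b ∈ B, ∀ σ, valE c d α a σ = b → m b = σ ∨ grevlex (m b) σ)
    {b : Fin d → ℕ} (hb : b ∈ B) (hx : xOnly c d (m b)) : b ∈ BA B α := by
  refine ⟨hb, fun z hz hz0 y hy hbyz => ?_⟩
  obtain ⟨j, z', hz', rfl⟩ := exists_eVec_add_of_mem_Amon hz hz0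
  set τ := m (y + z') + Finsupp.single (Fin.natAdd c j) 1
  have hτval : valE c d α a τ = b := by
    rw [valE_add, hmval _ (add_mem hy (hA hz')), valE_single, hbyz]
    simp only [gens, Fin.addCases_right, one_smul]
    abel
  have hτj : τ (Fin.natAdd c j) ≠ 0 := by simp [τ]
  rcases hmmin b hb τ hτval with h | h
  · exact hτj (h ▸ hx j)
  · refine hx.not_grevlex hτj (degE_eq_of_valE_eq hα hdeg ?_).ge h
    rw [hmval b hb, hτval]

theorem m_zero (hα : 0 < α) (hdeg : ∀ i, ∑ j, a i j = α)
    (hmval : ∀ b ∈ B, valE c d α a (m b) = b) : m 0 = 0 :=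
  degE_eq_zero_iff.mp <| (degE_eq_of_valE_eq hα hdeg (τ := 0)
    ((hmval 0 B.zero_mem).trans (by simp [valE]))).trans (by simp [degE])

/-- Peel off one `xᵢ` at a time: `xᵢ m_b ∉ N₁` forces `xᵢ m_b = m_{aᵢ + b}`. -/
theorem exists_mem_BA_eq_m_of_xOnly (hα : 0 < α) (hdeg : ∀ i, ∑ j, a i j = α)
    (ha : ∀ i, a i ∈ B) (hA : Amon d α ≤ B)
    (hmval : ∀ b ∈ B, valE c d α a (m b) = b)
    (hmmin : ∀ b ∈ B, ∀ σ, valE c d α a σ = b → m b = σ ∨ grevlex (m b) σ)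
    (μ : Fin (c + d) →₀ ℕ) (hμ : xOnly c d μ) (hN1 : ∀ n ∈ N1set c d α a B m, ¬ n ≤ μ) :
    ∃ b ∈ BA B α, μ = m b := by
  induction μ using WellFoundedLT.induction with
  | _ μ ih =>
    by_cases h0 : μ = 0
    · have hm0 := m_zero hα hdeg hmval
      refine ⟨0, mem_BA_of_xOnly hα hdeg hA hmval hmmin B.zero_mem ?_, h0.trans hm0.symm⟩
      rw [hm0]
      exact fun _ => rfl
    obtain ⟨i, hi⟩ := hμ.exists_castAdd_ne_zero h0
    obtain ⟨μ', rfl⟩ : ∃ μ', μ = Finsupp.single (Fin.castAdd d i) 1 + μ' :=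
      exists_add_of_le (Finsupp.single_le_iff.mpr (Nat.one_le_iff_ne_zero.mpr hi))
    have hμ'le : μ' ≤ Finsupp.single (Fin.castAdd d i) 1 + μ' := le_add_self
    obtain ⟨b, hb, rfl⟩ := ih μ' (lt_add_of_pos_left μ' (by simp [pos_iff_ne_zero]))
      (hμ.mono hμ'le) fun n hn hnle => hN1 n hn (hnle.trans hμ'le)
    have hab : Finsupp.single (Fin.castAdd d i) 1 + m b = m (a i + b) := by
      by_contra hne
      exact hN1 _ ⟨i, b, hb, rfl, hne⟩ le_rfl
    exact ⟨a i + b, mem_BA_of_xOnly hα hdeg hA hmval hmmin (add_mem (ha i) hb.1) (hab ▸ hμ), hab⟩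

end SimplicialToric

theorem xpart_eq_mb_of_not_divisible_by_N1_general
    (c d α : ℕ) (hα : 0 < α)
    (a : Fin c → Fin d → ℕ) (B : AddSubmonoid (Fin d → ℕ))
    (hBgen : B = AddSubmonoid.closure (Set.range a ∪ Set.range (eVec d α)))
    (hdeg : ∀ i, ∑ j, a i j = α)
    (m : (Fin d → ℕ) → (Fin (c + d) →₀ ℕ))
    (hmval : ∀ b ∈ B, valE c d α a (m b) = b)
    (hmmin : ∀ b ∈ B, ∀ σ, valE c d α a σ = b → m b = σ ∨ grevlex (m b) σ) :
    ∀ σ : Fin (c + d) →₀ ℕ, (¬ ∃ n ∈ N1set c d α a B m, ∃ ρ, σ = n + ρ) →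
      ∃ b ∈ BA B α, xpart c d σ = m b ∧ σ = m b + ypart c d σ := by
  intro σ hσ
  have ha : ∀ i, a i ∈ B := fun i => hBgen ▸ AddSubmonoid.subset_closure (.inl ⟨i, rfl⟩)
  have hA : Amon d α ≤ B := hBgen ▸ AddSubmonoid.closure_mono Set.subset_union_right
  have hxσ : xpart c d σ ≤ σ := le_of_le_of_eq le_self_add (xpart_add_ypart σ)
  obtain ⟨b, hb, hxb⟩ := exists_mem_BA_eq_m_of_xOnly hα hdeg ha hA hmval hmmin (xpart c d σ)
    (xpart_xOnly σ) fun n hn hnle => hσ ⟨n, hn, exists_add_of_le (hnle.trans hxσ)⟩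
  exact ⟨b, hb, hxb, hxb ▸ (xpart_add_ypart σ).symm⟩

/-- If a monomial `x^μ y^ν` is not divisible by any element of `N₁`,
then `x^μ = m_b` for some `b ∈ B_A`; consequently `x^μ y^ν ∈ M₁`. -/
theorem xpart_eq_mb_of_not_divisible_by_N1
    (c d α : ℕ) (hα : 0 < α)
    (a : Fin c → Fin d → ℕ) (B : AddSubmonoid (Fin d → ℕ))
    (hBgen : B = AddSubmonoid.closure (Set.range a ∪ Set.range (eVec d α)))
    (hhilb : Hilb B = Set.range a ∪ Set.range (eVec d α))
    (hdeg : ∀ i, ∑ j, a i j = α)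
    (m : (Fin d → ℕ) → (Fin (c + d) →₀ ℕ))
    (hmval : ∀ b ∈ B, valE c d α a (m b) = b)
    (hmmin : ∀ b ∈ B, ∀ σ, valE c d α a σ = b → m b = σ ∨ grevlex (m b) σ) :
    ∀ σ : Fin (c + d) →₀ ℕ, (¬ ∃ n ∈ N1set c d α a B m, ∃ ρ, σ = n + ρ) →
      ∃ b ∈ BA B α, xpart c d σ = m b ∧ σ = m b + ypart c d σ :=
  xpart_eq_mb_of_not_divisible_by_N1_general c d α hα a B hBgen hdeg m hmval hmmin
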